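/- Let g : {−1,1}ⁿ → {0,1} with multilinear extension to [−1,1]ⁿ. Then for every x ∈ (−1,1)ⁿ, g(x)(1 − g(x)) ≥ Σ_{i=1}^n (1 − xᵢ²)(∂ᵢ g(x))². -/

import Mathlib

/-!
Let `y ∈ {±1}ⁿ` have independent coordinates with `E yᵢ = xᵢ`. A multilinear `G` then satisfies
`G(x) = E g(y)`, the centred spins `uᵢ = yᵢ - xᵢ` are orthogonal with `E uᵢ² = 1 - xᵢ²`, and
`E (g uᵢ) = (1 - xᵢ²) ∂ᵢG(x)`. As `g` is `{0,1}`-valued, `Var g = G(x)(1 - G(x))`, and Bessel's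
inequality for the family `uᵢ` bounds this variance below by `∑ᵢ (1 - xᵢ²) (∂ᵢG(x))²`.
-/

open Finset

section Bessel

variable {R ι : Type*} [CommRing R] [Algebra ℝ R] [Fintype ι] [DecidableEq ι]

theorem sum_mul_sq_le_of_orthogonal (E : R →ₗ[ℝ] ℝ) (hE : ∀ f, 0 ≤ E (f * f))
    (u : ι → R) (σ a : ι → ℝ) (s : R)
    (horth : ∀ i j, E (u i * u j) = if i = j then σ i else 0)
    (hcov : ∀ i, E (s * u i) = σ i * a i) :
    ∑ i, σ i * a i ^ 2 ≤ E (s * s) := by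
  set v := ∑ i, a i • u i
  have hsv : E (s * v) = ∑ i, σ i * a i ^ 2 := by
    simp only [v, mul_sum, mul_smul_comm, map_sum, map_smul, hcov, smul_eq_mul]
    exact sum_congr rfl fun i _ => by ring
  have hvv : E (v * v) = ∑ i, σ i * a i ^ 2 := by
    simp only [v, sum_mul_sum, smul_mul_smul_comm, map_sum, map_smul, horth, smul_eq_mul,
      mul_ite, mul_zero, sum_ite_eq, mem_univ, if_true]
    exact sum_congr rfl fun i _ => by ring
  have hsq := hE (s - v)
  rw [sub_mul, mul_sub, mul_sub, mul_comm v s, map_sub, map_sub, map_sub, hsv, hvv] at hsq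
  linarith

theorem sum_mul_sq_le_variance (E : R →ₗ[ℝ] ℝ) (hE : ∀ f, 0 ≤ E (f * f)) (hE1 : E 1 = 1)
    (u : ι → R) (σ a : ι → ℝ) (t : R)
    (horth : ∀ i j, E (u i * u j) = if i = j then σ i else 0)
    (hmean : ∀ i, E (u i) = 0) (hcov : ∀ i, E (t * u i) = σ i * a i) :
    ∑ i, σ i * a i ^ 2 ≤ E (t * t) - E t ^ 2 := by
  set m := E t
  have hcentered : (t - m • 1) * (t - m • 1) = t * t - (2 * m) • t + (m ^ 2) • 1 := by
    simp only [Algebra.smul_def, map_mul, map_pow, map_ofNat]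
    ring
  have key := sum_mul_sq_le_of_orthogonal E hE u σ a (t - m • 1) horth fun i => by
    rw [sub_mul, smul_mul_assoc, one_mul, map_sub, map_smul, hmean, hcov, smul_zero, sub_zero]
  rw [hcentered, map_add, map_sub, map_smul, map_smul, hE1] at key
  simp only [smul_eq_mul] at key
  linarith

end Bessel

namespace BiasedCube

variable {ι : Type*}

noncomputable def spin (b : Bool) : ℝ := if b then 1 else -1

theorem spin_mul_self (b : Bool) : spin b * spin b = 1 := by cases b <;> simp [spin]

theorem spin_eq_one_or_eq_neg_one (b : Bool) : spin b = 1 ∨ spin b = -1 := by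
  cases b <;> simp [spin]

noncomputable def spinAt (i : ι) (y : ι → Bool) : ℝ := spin (y i)

noncomputable def walsh (A : Finset ι) : (ι → Bool) → ℝ := ∏ i ∈ A, spinAt i

theorem sum_walsh_apply [Fintype ι] (c : Finset ι → ℝ) (y : ι → Bool) :
    (∑ A, c A • walsh A) y = ∑ A, c A * ∏ i ∈ A, spin (y i) := by
  simp only [Finset.sum_apply, Pi.smul_apply, walsh, Finset.prod_apply, spinAt, smul_eq_mul]

theorem walsh_mul_spinAt [DecidableEq ι] (A : Finset ι) (i : ι) :
    walsh A * spinAt i = if i ∈ A then walsh (A.erase i) else walsh (insert i A) := by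
  split_ifs with h
  · rw [walsh, ← mul_prod_erase A _ h, mul_comm (spinAt i), mul_assoc]
    ext y
    simp [spin_mul_self, spinAt, walsh]
  · rw [walsh, walsh, prod_insert h, mul_comm]

variable [Fintype ι] [DecidableEq ι]

/-- Mass function of the product measure on `ι → Bool` under which `spin (y i)` has mean `x i`. -/
noncomputable def biasedWeight (x : ι → ℝ) (y : ι → Bool) : ℝ := ∏ i, (1 + x i * spin (y i)) / 2

noncomputable def biasedExpect (x : ι → ℝ) : ((ι → Bool) → ℝ) →ₗ[ℝ] ℝ where
  toFun f := ∑ y, biasedWeight x y * f y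
  map_add' f g := by simp only [Pi.add_apply, mul_add, sum_add_distrib]
  map_smul' r f := by
    simp only [Pi.smul_apply, smul_eq_mul, mul_sum, RingHom.id_apply, mul_left_comm]

theorem biasedExpect_apply (x : ι → ℝ) (f : (ι → Bool) → ℝ) :
    biasedExpect x f = ∑ y, biasedWeight x y * f y := rfl

theorem biasedExpect_mul_self_nonneg {x : ι → ℝ} (hx : ∀ i, x i ∈ Set.Icc (-1 : ℝ) 1)
    (f : (ι → Bool) → ℝ) : 0 ≤ biasedExpect x (f * f) := by
  refine sum_nonneg fun y _ => mul_nonneg (prod_nonneg fun i _ => ?_) (mul_self_nonneg _)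
  obtain ⟨h₁, h₂⟩ := hx i
  cases y i <;> simp only [spin] <;> norm_num <;> linarith

theorem biasedExpect_walsh (x : ι → ℝ) (A : Finset ι) :
    biasedExpect x (walsh A) = ∏ i ∈ A, x i := by
  have hsplit : ∀ y : ι → Bool, biasedWeight x y * walsh A y
      = ∏ i, ((1 + x i * spin (y i)) / 2 * if i ∈ A then spin (y i) else 1) := fun y => by
    rw [biasedWeight, walsh, prod_apply, prod_mul_distrib, prod_ite_mem, univ_inter]
    rfl
  have hcoord : ∀ i, ∑ b : Bool, ((1 + x i * spin b) / 2 * if i ∈ A then spin b else 1)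
      = if i ∈ A then x i else 1 := fun i => by
    by_cases h : i ∈ A <;> simp [spin, h] <;> ring
  rw [biasedExpect_apply]
  simp_rw [hsplit]
  rw [← Fintype.prod_sum fun i b => (1 + x i * spin b) / 2 * if i ∈ A then spin b else 1]
  simp_rw [hcoord]
  rw [prod_ite_mem, univ_inter]

theorem biasedExpect_one (x : ι → ℝ) : biasedExpect x 1 = 1 := by
  simpa [walsh] using biasedExpect_walsh x ∅

theorem biasedExpect_walsh_mul_spinAt (x : ι → ℝ) (A : Finset ι) (i : ι) :
    biasedExpect x (walsh A * spinAt i)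
      = if i ∈ A then ∏ j ∈ A.erase i, x j else x i * ∏ j ∈ A, x j := by
  rw [walsh_mul_spinAt]
  split_ifs with h
  · rw [biasedExpect_walsh]
  · rw [biasedExpect_walsh, prod_insert h]

noncomputable def centeredSpin (x : ι → ℝ) (i : ι) : (ι → Bool) → ℝ := spinAt i - x i • 1

theorem biasedExpect_centeredSpin (x : ι → ℝ) (i : ι) :
    biasedExpect x (centeredSpin x i) = 0 := by
  have := biasedExpect_walsh x {i}
  simp only [walsh, prod_singleton] at this
  rw [centeredSpin, map_sub, map_smul, biasedExpect_one, this, smul_eq_mul, mul_one, sub_self]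

theorem biasedExpect_walsh_mul_centeredSpin (x : ι → ℝ) (A : Finset ι) (i : ι) :
    biasedExpect x (walsh A * centeredSpin x i)
      = if i ∈ A then (1 - x i ^ 2) * ∏ j ∈ A.erase i, x j else 0 := by
  rw [centeredSpin, mul_sub, mul_smul_comm, mul_one, map_sub, map_smul,
    biasedExpect_walsh_mul_spinAt, biasedExpect_walsh, smul_eq_mul]
  split_ifs with h
  · rw [← mul_prod_erase A x h]
    ring
  · ring

theorem biasedExpect_centeredSpin_mul (x : ι → ℝ) (i j : ι) :
    biasedExpect x (centeredSpin x i * centeredSpin x j)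
      = if i = j then 1 - x i ^ 2 else 0 := by
  rw [mul_comm, show centeredSpin x j = walsh {j} - x j • 1 by simp [centeredSpin, walsh],
    sub_mul, smul_mul_assoc, one_mul, map_sub, map_smul, biasedExpect_centeredSpin, smul_zero,
    sub_zero, biasedExpect_walsh_mul_centeredSpin]
  split_ifs with h <;> simp_all

theorem biasedExpect_sum_walsh (x : ι → ℝ) (c : Finset ι → ℝ) :
    biasedExpect x (∑ A, c A • walsh A) = ∑ A, c A * ∏ i ∈ A, x i := by
  simp only [map_sum, map_smul, biasedExpect_walsh, smul_eq_mul]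

theorem biasedExpect_sum_walsh_mul_centeredSpin (x : ι → ℝ) (c : Finset ι → ℝ) (i : ι) :
    biasedExpect x ((∑ A, c A • walsh A) * centeredSpin x i)
      = (1 - x i ^ 2) * ∑ A ∈ univ.filter (fun A : Finset ι => i ∈ A),
          c A * ∏ j ∈ A.erase i, x j := by
  simp only [sum_mul, smul_mul_assoc, map_sum, map_smul, biasedExpect_walsh_mul_centeredSpin,
    smul_eq_mul, sum_filter, mul_sum]
  exact sum_congr rfl fun A _ => by split_ifs <;> ring

end BiasedCube

/-- If the multilinear polynomial `G(x) = ∑_A c(A) ∏_{i∈A} x_i` (the multilinear extension of a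
Boolean function) takes values in `{0,1}` on `{-1,1}ⁿ`, then for every `x ∈ (-1,1)ⁿ`,
`G(x)(1-G(x)) ≥ ∑_i (1-x_i²)(∂_i G(x))²`, where
`∂_i G(x) = ∑_{A ∋ i} c(A) ∏_{j ∈ A\{i}} x_j`. -/
theorem stmt12 (n : ℕ) (c : Finset (Fin n) → ℝ) (G : (Fin n → ℝ) → ℝ)
    (hG : ∀ x, G x = ∑ A : Finset (Fin n), c A * ∏ i ∈ A, x i)
    (hBool : ∀ x : Fin n → ℝ, (∀ i, x i = 1 ∨ x i = -1) → G x = 0 ∨ G x = 1)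
    (x : Fin n → ℝ) (hx : ∀ i, x i ∈ Set.Ioo (-1 : ℝ) 1) :
    G x * (1 - G x) ≥ ∑ i : Fin n, (1 - (x i) ^ 2) *
      (∑ A ∈ Finset.univ.filter (fun A : Finset (Fin n) => i ∈ A),
        c A * ∏ j ∈ A.erase i, x j) ^ 2 := by
  set g := ∑ A, c A • BiasedCube.walsh A with hg_def
  have hg_idem : g * g = g := funext fun y => by
    have hgy : g y = G fun i => BiasedCube.spin (y i) := by
      rw [hg_def, BiasedCube.sum_walsh_apply, hG]
    rcases hBool _ fun i => BiasedCube.spin_eq_one_or_eq_neg_one (y i) with h | h <;>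
      simp [hgy, h]
  have key := sum_mul_sq_le_variance (BiasedCube.biasedExpect x)
    (BiasedCube.biasedExpect_mul_self_nonneg fun i => Set.Ioo_subset_Icc_self (hx i))
    (BiasedCube.biasedExpect_one x) (BiasedCube.centeredSpin x) _ _ g
    (BiasedCube.biasedExpect_centeredSpin_mul x) (BiasedCube.biasedExpect_centeredSpin x)
    (BiasedCube.biasedExpect_sum_walsh_mul_centeredSpin x c)
  rw [hg_idem, BiasedCube.biasedExpect_sum_walsh, ← hG] at key
  linarith
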